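/- In the group G = F_2^{n-1} ⋊_φ D_{2n} with ρ_0 = (0,h_0), ρ_1 = (0,h_1), ρ_2 = ((0,...,0,1)^T, h_0), the intersection of the subgroups ⟨ρ_0, ρ_1⟩ and ⟨ρ_1, ρ_2⟩ equals ⟨ρ_1⟩. -/

import Mathlib

open Matrix DihedralGroup

/-- The matrix `U` of Lemma 3: (0-indexed) row `i` has a 1 at column `n-3-i` for
`i ≤ n-3`, and the last row is all ones. -/
def Umat (n : ℕ) : Matrix (Fin (n-1)) (Fin (n-1)) (ZMod 2) :=
  Matrix.of fun i j =>
    if (i : ℕ) = n - 2 then 1 else if (i : ℕ) + (j : ℕ) = n - 3 then 1 else 0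

/-- The anti-diagonal permutation matrix `V` of Lemma 3. -/
def Vmat (n : ℕ) : Matrix (Fin (n-1)) (Fin (n-1)) (ZMod 2) :=
  Matrix.of fun i j => if (i : ℕ) + (j : ℕ) = n - 2 then 1 else 0

/-- u = (0,…,0,1)ᵀ ∈ F₂^{n-1}. -/
def uVec (n : ℕ) : Fin (n-1) → ZMod 2 := fun i => if (i : ℕ) = n - 2 then 1 else 0

/-- v = Vu = (1,0,…,0)ᵀ ∈ F₂^{n-1}. -/
def vVec (n : ℕ) : Fin (n-1) → ZMod 2 := fun i => if (i : ℕ) = 0 then 1 else 0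

/-- The action of `D_{2n}` on `F₂^{n-1}` (written multiplicatively) induced by a
representation `φ : D_{2n} → Aut(F₂^{n-1})`. -/
def dihAct (n : ℕ) (φ : DihedralGroup n →* Multiplicative (AddAut (Fin (n-1) → ZMod 2))) :
    DihedralGroup n →* MulAut (Multiplicative (Fin (n-1) → ZMod 2)) where
  toFun x := AddEquiv.toMultiplicative (Multiplicative.toAdd (φ x))
  map_one' := by ext w; simp
  map_mul' x y := by ext w; simp [AddAut.coe_add]

/-- The semidirect product `G = F₂^{n-1} ⋊_φ D_{2n}`. -/
abbrev Gsd (n : ℕ) (φ : DihedralGroup n →* Multiplicative (AddAut (Fin (n-1) → ZMod 2))) :=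
  Multiplicative (Fin (n-1) → ZMod 2) ⋊[dihAct n φ] DihedralGroup n

/-- `ρ₀ = (0, h₀)`, where `h₀ = sr 0`. -/
def rho0 (n : ℕ) (φ : DihedralGroup n →* Multiplicative (AddAut (Fin (n-1) → ZMod 2))) : Gsd n φ :=
  ⟨Multiplicative.ofAdd 0, sr 0⟩

/-- `ρ₁ = (0, h₁)`, where `h₁ = sr 1`. -/
def rho1 (n : ℕ) (φ : DihedralGroup n →* Multiplicative (AddAut (Fin (n-1) → ZMod 2))) : Gsd n φ :=
  ⟨Multiplicative.ofAdd 0, sr 1⟩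

/-- `ρ₂ = (u, h₀)`, where `u = (0,…,0,1)ᵀ`. -/
def rho2 (n : ℕ) (φ : DihedralGroup n →* Multiplicative (AddAut (Fin (n-1) → ZMod 2))) : Gsd n φ :=
  ⟨Multiplicative.ofAdd (uVec n), sr 0⟩

/-!
`ρ₁` and `ρ₂` are involutions, so `⟨ρ₁, ρ₂⟩` consists of the powers of `t = ρ₁ρ₂` and their
products with `ρ₁`, while `⟨ρ₀, ρ₁⟩` lies in the complement `D_{2n}` of elements with zero vector
part. The vector part of `t^m` is the orbit of `0` under the affine map `w ↦ V(u + Uw)`, which runs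
through `0, e₀, e₁, …, e_{n-2}` and back to `0`. Hence `t^n = 1` and a power of `t` with zero
vector part is trivial, so an element of the intersection is `1` or `ρ₁`.
-/

section InvolutionPair

variable {G : Type*} [Group G] {a b : G}

theorem exists_zpow_of_mem_closure_pair (ha : a * a = 1) (hb : b * b = 1) {g : G}
    (hg : g ∈ Subgroup.closure {a, b}) : ∃ k : ℤ, g = (a * b) ^ k ∨ g = a * (a * b) ^ k := by
  have ha' : a⁻¹ = a := inv_eq_of_mul_eq_one_left ha
  have hba : b * a = (a * b)⁻¹ := by rw [_root_.mul_inv_rev, ha', inv_eq_of_mul_eq_one_left hb]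
  have swap (k : ℤ) : (a * b) ^ k * a = a * (a * b) ^ (-k) := by
    rw [mul_zpow_mul, hba, _root_.inv_zpow, _root_.zpow_neg]
  induction hg using Subgroup.closure_induction with
  | mem x hx =>
    rcases hx with rfl | rfl
    · exact ⟨0, Or.inr (by simp)⟩
    · exact ⟨1, Or.inr (by rw [zpow_one, ← mul_assoc, ha, one_mul])⟩
  | one => exact ⟨0, Or.inl (zpow_zero _).symm⟩
  | mul x y _ _ hx hy =>
    obtain ⟨i, rfl | rfl⟩ := hx <;> obtain ⟨j, rfl | rfl⟩ := hy
    · exact ⟨i + j, Or.inl (by group)⟩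
    · exact ⟨-i + j, Or.inr (by rw [← mul_assoc, swap]; group)⟩
    · exact ⟨i + j, Or.inr (by group)⟩
    · refine ⟨-i + j, Or.inl ?_⟩
      rw [mul_assoc, ← mul_assoc _ a, swap, ← mul_assoc, ← mul_assoc, ha]
      group
  | inv x _ hx =>
    obtain ⟨i, rfl | rfl⟩ := hx
    · exact ⟨-i, Or.inl (by group)⟩
    · exact ⟨i, Or.inr (by rw [_root_.mul_inv_rev, ha', ← _root_.zpow_neg, swap, neg_neg])⟩

end InvolutionPair

theorem SemidirectProduct.mem_range_inr_iff {N H : Type*} [Group N] [Group H]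
    {φ : H →* MulAut N} {x : N ⋊[φ] H} :
    x ∈ (SemidirectProduct.inr : H →* N ⋊[φ] H).range ↔ x.left = 1 :=
  ⟨by rintro ⟨g, rfl⟩; rfl, fun h => ⟨x.right, by ext <;> simp [h]⟩⟩

open Multiplicative

/-- The vector part of `(ρ₁ρ₂)^m` for `m ≤ n`: the basis vector `e_{m-1}`, or `0` when
`m = 0` or `m = n`. -/
def orbitVec (n m : ℕ) : Fin (n-1) → ZMod 2 := fun i => if (i : ℕ) + 1 = m then 1 else 0

section Vectors

variable {n : ℕ}

theorem orbitVec_eq_zero_iff {m : ℕ} (hm : m ≤ n) : orbitVec n m = 0 ↔ m = 0 ∨ m = n := by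
  constructor
  · intro h
    by_contra! hm0
    have := congrFun h ⟨m - 1, by omega⟩
    simp only [orbitVec, Pi.zero_apply] at this
    rw [if_pos (by omega)] at this
    exact one_ne_zero this
  · intro h
    funext i
    simp only [orbitVec, Pi.zero_apply]
    rw [if_neg (by omega)]

theorem orbitVec_succ (j : Fin (n-1)) : orbitVec n (j + 1) = Pi.single j 1 := by
  funext i
  simp only [orbitVec, Pi.single_apply, Fin.ext_iff, add_left_inj]

theorem uVec_eq_single (hn : 2 ≤ n) : uVec n = Pi.single ⟨n - 2, by omega⟩ 1 := by
  funext i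
  simp only [uVec, Pi.single_apply, Fin.ext_iff]

theorem Vmat_mulVec_apply (w : Fin (n-1) → ZMod 2) (i : Fin (n-1)) :
    (Vmat n *ᵥ w) i = w i.rev := by
  have hrev (j : Fin (n-1)) : (i : ℕ) + j = n - 2 ↔ i.rev = j := by
    rw [Fin.ext_iff, Fin.val_rev]; omega
  simp only [mulVec, dotProduct, Vmat, of_apply, hrev, ite_mul, one_mul, zero_mul,
    Finset.sum_ite_eq, Finset.mem_univ, if_true]

theorem Umat_mulVec_uVec (hn : 3 ≤ n) : Umat n *ᵥ uVec n = uVec n := by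
  rw [uVec_eq_single (by omega), mulVec_single_one]
  funext i
  simp only [col_apply, Umat, of_apply, Pi.single_apply, Fin.ext_iff]
  split_ifs <;> first | rfl | omega

theorem Vmat_mulVec_uVec_add_Umat_mulVec_orbitVec (hn : 3 ≤ n) {m : ℕ} (hm : m < n) :
    Vmat n *ᵥ (uVec n + Umat n *ᵥ orbitVec n m) = orbitVec n (m + 1) := by
  funext i
  rcases m with _ | j
  · simp only [Vmat_mulVec_apply, (orbitVec_eq_zero_iff (Nat.zero_le n)).2 (Or.inl rfl),
      mulVec_zero, add_zero, uVec, orbitVec, Fin.val_rev]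
    split_ifs <;> first | rfl | omega
  · rw [show j = ((⟨j, by omega⟩ : Fin (n-1)) : ℕ) from rfl, orbitVec_succ, mulVec_single_one,
      Vmat_mulVec_apply]
    simp only [Pi.add_apply, col_apply, uVec, Umat, of_apply, orbitVec, Fin.val_rev]
    split_ifs <;> first | decide | omega

end Vectors

section Generators

variable {n : ℕ} {φ : DihedralGroup n →* Multiplicative (AddAut (Fin (n-1) → ZMod 2))}

theorem dihAct_ofAdd (x : DihedralGroup n) (w : Fin (n-1) → ZMod 2) :
    dihAct n φ x (ofAdd w) = ofAdd (toAdd (φ x) w) :=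
  rfl

theorem rho0_mem_range_inr : rho0 n φ ∈ (SemidirectProduct.inr : _ →* Gsd n φ).range :=
  ⟨sr 0, rfl⟩

theorem rho1_mem_range_inr : rho1 n φ ∈ (SemidirectProduct.inr : _ →* Gsd n φ).range :=
  ⟨sr 1, rfl⟩

theorem rho1_mul_self : rho1 n φ * rho1 n φ = 1 := by
  show SemidirectProduct.inr (sr 1) * SemidirectProduct.inr (sr 1) = 1
  rw [← _root_.map_mul, sr_mul_self, _root_.map_one]

theorem rho2_mul_self (hn : 3 ≤ n)
    (hφ0 : ∀ w, Multiplicative.toAdd (φ (sr 0)) w = (Umat n).mulVec w) :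
    rho2 n φ * rho2 n φ = 1 := by
  refine SemidirectProduct.ext ?_ ?_
  · show ofAdd (uVec n) * dihAct n φ (sr 0) (ofAdd (uVec n)) = 1
    rw [dihAct_ofAdd, hφ0, Umat_mulVec_uVec hn, ← ofAdd_add, ZModModule.add_self, ofAdd_zero]
  · exact sr_mul_self 0

theorem rho1_mul_rho2_pow_left (hn : 3 ≤ n)
    (hφ0 : ∀ w, Multiplicative.toAdd (φ (sr 0)) w = (Umat n).mulVec w)
    (hφ1 : ∀ w, Multiplicative.toAdd (φ (sr 1)) w = (Vmat n).mulVec w) {m : ℕ} (hm : m ≤ n) :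
    ((rho1 n φ * rho2 n φ) ^ m).left = ofAdd (orbitVec n m) := by
  induction m with
  | zero => rw [(orbitVec_eq_zero_iff (Nat.zero_le n)).2 (Or.inl rfl)]; rfl
  | succ m ih =>
    rw [pow_succ', SemidirectProduct.mul_left, ih (by omega),
      ← Vmat_mulVec_uVec_add_Umat_mulVec_orbitVec hn (by omega)]
    show ofAdd 0 * dihAct n φ (sr 1) (ofAdd (uVec n)) *
      dihAct n φ (sr 1 * sr 0) (ofAdd (orbitVec n m)) = _
    simp only [_root_.map_mul, MulAut.mul_apply, dihAct_ofAdd, hφ0, hφ1, ofAdd_zero, one_mul,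
      ← ofAdd_add, ← mulVec_add]

theorem rho1_mul_rho2_pow_n (hn : 3 ≤ n)
    (hφ0 : ∀ w, Multiplicative.toAdd (φ (sr 0)) w = (Umat n).mulVec w)
    (hφ1 : ∀ w, Multiplicative.toAdd (φ (sr 1)) w = (Vmat n).mulVec w) :
    (rho1 n φ * rho2 n φ) ^ n = 1 := by
  refine SemidirectProduct.ext ?_ ?_
  · rw [rho1_mul_rho2_pow_left hn hφ0 hφ1 le_rfl, (orbitVec_eq_zero_iff le_rfl).2 (Or.inr rfl),
      ofAdd_zero]
    rfl
  · rw [← SemidirectProduct.rightHom_eq_right, map_pow]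
    show (sr (1 : ZMod n) * sr 0) ^ n = 1
    rw [sr_mul_sr, r_pow, ZMod.natCast_self, mul_zero, r_zero]

theorem rho1_mul_rho2_zpow_eq_one_of_mem_range_inr (hn : 3 ≤ n)
    (hφ0 : ∀ w, Multiplicative.toAdd (φ (sr 0)) w = (Umat n).mulVec w)
    (hφ1 : ∀ w, Multiplicative.toAdd (φ (sr 1)) w = (Vmat n).mulVec w) {k : ℤ}
    (hk : (rho1 n φ * rho2 n φ) ^ k ∈ (SemidirectProduct.inr : _ →* Gsd n φ).range) :
    (rho1 n φ * rho2 n φ) ^ k = 1 := by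
  rw [zpow_eq_zpow_emod' k (rho1_mul_rho2_pow_n hn hφ0 hφ1)] at hk ⊢
  obtain ⟨m, hm⟩ := Int.eq_ofNat_of_zero_le (Int.emod_nonneg k (by omega : (n : ℤ) ≠ 0))
  have hmn : m < n := by have := Int.emod_lt_of_pos k (by omega : (0 : ℤ) < n); omega
  rw [hm, zpow_natCast] at hk ⊢
  rw [SemidirectProduct.mem_range_inr_iff, rho1_mul_rho2_pow_left hn hφ0 hφ1 hmn.le, ← ofAdd_zero,
    ofAdd.injective.eq_iff, orbitVec_eq_zero_iff hmn.le] at hk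
  obtain rfl : m = 0 := hk.resolve_right hmn.ne
  exact pow_zero _

end Generators

/-- The intersection of the subgroups generated by {ρ0, ρ1} and {ρ1, ρ2} equals the subgroup generated by ρ1. -/
theorem stmt_14 (n : ℕ) (hn : 3 ≤ n)
    (φ : DihedralGroup n →* Multiplicative (AddAut (Fin (n-1) → ZMod 2)))
    (hφ0 : ∀ w, Multiplicative.toAdd (φ (sr 0)) w = (Umat n).mulVec w)
    (hφ1 : ∀ w, Multiplicative.toAdd (φ (sr 1)) w = (Vmat n).mulVec w) :
    Subgroup.closure {rho0 n φ, rho1 n φ} ⊓ Subgroup.closure {rho1 n φ, rho2 n φ} =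
      Subgroup.closure {rho1 n φ} := by
  have h01 :
      Subgroup.closure {rho0 n φ, rho1 n φ} ≤ (SemidirectProduct.inr : _ →* Gsd n φ).range :=
    (Subgroup.closure_le _).2 (Set.insert_subset rho0_mem_range_inr
      (Set.singleton_subset_iff.2 rho1_mem_range_inr))
  refine le_antisymm ?_ (le_inf (Subgroup.closure_mono (by simp)) (Subgroup.closure_mono (by simp)))
  rintro g ⟨hg01, hg12⟩
  obtain ⟨k, rfl | rfl⟩ :=
    exists_zpow_of_mem_closure_pair rho1_mul_self (rho2_mul_self hn hφ0) hg12
  · rw [rho1_mul_rho2_zpow_eq_one_of_mem_range_inr hn hφ0 hφ1 (h01 hg01)]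
    exact one_mem _
  · have hk := (Subgroup.mul_mem_cancel_left _ rho1_mem_range_inr).1 (h01 hg01)
    rw [rho1_mul_rho2_zpow_eq_one_of_mem_range_inr hn hφ0 hφ1 hk, mul_one]
    exact Subgroup.subset_closure rfl
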